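/- The signed graph ST, obtained from an all-negative triangle K_3 on vertices u, v, w by joining m ≥ 1 new pendant vertices to w by positive edges, admits an additively graceful labeling. -/

import Mathlib

open Finset

/-- Edge label for a negative (or ordinary) edge: sum of endpoint labels. -/
def negLabel (f : ℕ → ℕ) : Sym2 ℕ → ℕ :=
  Sym2.lift ⟨fun a b => f a + f b, fun a b => Nat.add_comm _ _⟩

/-- Edge label for a positive edge: absolute difference of endpoint labels. -/
def posLabel (f : ℕ → ℕ) : Sym2 ℕ → ℕ :=
  Sym2.lift ⟨fun a b => max (f a) (f b) - min (f a) (f b),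
    fun a b => by simp only []; rw [max_comm, min_comm]⟩

/-- A (p,q)-graph with vertex finset `Vs` and edge finset `E` is additively graceful:
there is an injective `f : Vs → {0,…,⌈(q+1)/2⌉}` whose induced edge sums are
distinct and exactly `{1,…,q}`.  (Note `⌈(q+1)/2⌉ = (q+2)/2` in `ℕ`.) -/
def IsAddGracefulGraph (Vs : Finset ℕ) (E : Finset (Sym2 ℕ)) : Prop :=
  ∃ f : ℕ → ℕ, Set.InjOn f ↑Vs ∧ (∀ v ∈ Vs, f v ≤ (E.card + 2) / 2) ∧
    Set.InjOn (negLabel f) ↑E ∧ E.image (negLabel f) = Finset.Icc 1 E.card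

/-- A signed graph with vertex finset `Vs`, positive edges `P` (m := P.card) and
negative edges `N` (n := N.card) is additively graceful: there is an injective
`f : Vs → {0,…,m + ⌈(n+1)/2⌉}` with positive-edge labels `|f u - f v|` exactly
`{1,…,m}` and negative-edge labels `f u + f v` exactly `{1,…,n}`. -/
def IsAddGracefulSigned (Vs : Finset ℕ) (P N : Finset (Sym2 ℕ)) : Prop :=
  ∃ f : ℕ → ℕ, Set.InjOn f ↑Vs ∧
    (∀ v ∈ Vs, f v ≤ P.card + (N.card + 2) / 2) ∧
    Set.InjOn (posLabel f) ↑P ∧ P.image (posLabel f) = Finset.Icc 1 P.card ∧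
    Set.InjOn (negLabel f) ↑N ∧ N.image (negLabel f) = Finset.Icc 1 N.card

/-! Label every vertex by itself: the triangle `0, 1, 2` then has edge sums `1, 2, 3`, and the
pendant edge `s(2, i)` has difference `i - 2`, which runs over `1, …, m`. -/

@[simp]
lemma posLabel_mk (f : ℕ → ℕ) (a b : ℕ) :
    posLabel f s(a, b) = max (f a) (f b) - min (f a) (f b) := rfl

lemma injOn_of_image_eq_Icc {E : Finset (Sym2 ℕ)} {g : Sym2 ℕ → ℕ}
    (h : E.image g = Icc 1 E.card) : Set.InjOn g E :=
  injOn_of_card_image_eq (by rw [h, Nat.card_Icc, Nat.add_sub_cancel])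

lemma isAddGracefulSigned_of_image_eq_Icc {Vs : Finset ℕ} {P N : Finset (Sym2 ℕ)}
    (f : ℕ → ℕ) (hf : Set.InjOn f Vs) (hbound : ∀ v ∈ Vs, f v ≤ P.card + (N.card + 2) / 2)
    (hP : P.image (posLabel f) = Icc 1 P.card) (hN : N.image (negLabel f) = Icc 1 N.card) :
    IsAddGracefulSigned Vs P N :=
  ⟨f, hf, hbound, injOn_of_image_eq_Icc hP, hP, injOn_of_image_eq_Icc hN, hN⟩

lemma card_image_mk_left (c : ℕ) (s : Finset ℕ) : (s.image fun i => s(c, i)).card = s.card :=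
  card_image_of_injective s fun _ _ h => Sym2.congr_right.mp h

lemma image_posLabel_id_star {c a b : ℕ} (hca : c < a) :
    ((Icc a b).image fun i => s(c, i)).image (posLabel id) = Icc (a - c) (b - c) := by
  ext d
  simp only [image_image, Function.comp_def, posLabel_mk, id, mem_image, mem_Icc]
  constructor
  · rintro ⟨i, hi, rfl⟩
    omega
  · intro hd
    exact ⟨d + c, by omega, by omega⟩

lemma image_negLabel_id_triangle :
    ({s(0, 1), s(0, 2), s(1, 2)} : Finset (Sym2 ℕ)).image (negLabel id) = Icc 1 3 := by
  decide

theorem stmt_6_general (m : ℕ) :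
    IsAddGracefulSigned (Finset.range (m + 3))
      ((Finset.Icc 3 (m + 2)).image fun i => s(2, i))
      {s(0, 1), s(0, 2), s(1, 2)} := by
  have hP : ((Icc 3 (m + 2)).image fun i => s(2, i)).card = m := by
    rw [card_image_mk_left, Nat.card_Icc]
    omega
  have hN : ({s(0, 1), s(0, 2), s(1, 2)} : Finset (Sym2 ℕ)).card = 3 := by decide
  refine isAddGracefulSigned_of_image_eq_Icc id (Set.injOn_id _) ?_ ?_ ?_
  · intro v hv
    rw [hP, hN]
    simp only [mem_range, id] at hv ⊢
    omega
  · rw [hP, image_posLabel_id_star (by norm_num), Nat.add_sub_cancel]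
  · rw [hN, image_negLabel_id_triangle]

/-- `ST`: an all-negative triangle on `0,1,2` with `m ≥ 1` pendant vertices
`3,…,m+2` joined to `2` by positive edges, admits an additively graceful
labeling. -/
theorem stmt_6 (m : ℕ) (hm : 1 ≤ m) :
    IsAddGracefulSigned (Finset.range (m + 3))
      ((Finset.Icc 3 (m + 2)).image fun i => s(2, i))
      {s(0, 1), s(0, 2), s(1, 2)} :=
  stmt_6_general m
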